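/- arXiv:1410.4037 — 8 statements merged into one kernel-verified Lean document; each statement's English description precedes it below -/
import Mathlib

section
/- Let A be a commutative ring with identity, Y a nonempty subset of Spec(A), and 𝒰 an ultrafilter on Y. Then the set Y_𝒰 := {a ∈ A : {p ∈ Y : a ∈ p} ∈ 𝒰} is a prime ideal of A. -/
open scoped nonZeroDivisors

/-- The ultrafilter limit point of `Y ⊆ Spec A` with respect to an ultrafilter on `Y`,
as a set. -/
def ultraLimitSet {A : Type*} [CommRing A] (Y : Set (PrimeSpectrum A))
    (𝒰 : Ultrafilter Y) : Set A :=
  {a : A | {p : Y | a ∈ (p : PrimeSpectrum A).asIdeal} ∈ 𝒰}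

theorem ultrafilter_limit_isPrime {A : Type*} [CommRing A] (Y : Set (PrimeSpectrum A))
    (hY : Y.Nonempty) (𝒰 : Ultrafilter Y) :
    ∃ I : Ideal A, I.IsPrime ∧ (I : Set A) = ultraLimitSet Y 𝒰 := by
  refine ⟨{ carrier := ultraLimitSet Y 𝒰
            add_mem' := ?_
            zero_mem' := ?_
            smul_mem' := ?_ }, ⟨?_, ?_⟩, rfl⟩
  · intro a b ha hb
    filter_upwards [ha, hb] with p hap hbp using p.1.asIdeal.add_mem hap hbp
  · exact Filter.Eventually.of_forall fun p => (p : Y).1.asIdeal.zero_mem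
  · intro c a ha
    filter_upwards [ha] with p hap using p.1.asIdeal.smul_mem c hap
  · intro h
    have h1 : (1:A) ∈ ultraLimitSet Y 𝒰 := by
      have := h.symm ▸ (Submodule.mem_top : (1:A) ∈ (⊤ : Ideal A))
      exact this
    have : {p : Y | (1:A) ∈ (p : PrimeSpectrum A).asIdeal} ∈ 𝒰 := h1
    have hemp : {p : Y | (1:A) ∈ (p : PrimeSpectrum A).asIdeal} = ∅ := by
      ext p; simpa using (Ideal.ne_top_iff_one _).mp p.1.isPrime.ne_top
    rw [hemp] at this
    exact Ultrafilter.empty_notMem this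
  · intro a b hab
    have : {p : Y | a * b ∈ (p : PrimeSpectrum A).asIdeal} ∈ 𝒰 := hab
    have hsub : {p : Y | a * b ∈ (p : PrimeSpectrum A).asIdeal} ⊆
        {p : Y | a ∈ (p : PrimeSpectrum A).asIdeal} ∪ {p : Y | b ∈ (p : PrimeSpectrum A).asIdeal} := by
      intro p hp
      exact p.1.isPrime.mem_or_mem hp
    have := 𝒰.toFilter.mem_of_superset this hsub
    exact Ultrafilter.union_mem_iff.mp this
end

section
/- Let A be a commutative ring and Y ⊆ Spec(A). The closure of Y in the constructible (patch) topology on Spec(A) equals the set of all ultrafilter limit points of Y, i.e., Cl^c(Y) = {Y_𝒰 : 𝒰 an ultrafilter on Y}, where Y_𝒰 = {a ∈ A : {p ∈ Y : a ∈ p} ∈ 𝒰}. -/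
open scoped nonZeroDivisors

/-- The constructible (patch) topology on the prime spectrum: the coarsest topology in
which every basic open `D(f)` is clopen. -/
def constructibleTop (A : Type*) [CommRing A] : TopologicalSpace (PrimeSpectrum A) :=
  TopologicalSpace.generateFrom
    {s | (∃ f : A, s = {p : PrimeSpectrum A | f ∉ p.asIdeal}) ∨
      (∃ f : A, s = {p : PrimeSpectrum A | f ∈ p.asIdeal})}
/-- An ultrafilter converges to `q` in the constructible topology iff membership in `q`
is detected by the ultrafilter. -/
lemma le_nhds_constructible_iff {A : Type*} [CommRing A] (q : PrimeSpectrum A)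
    (u : Ultrafilter (PrimeSpectrum A)) :
    (u : Filter _) ≤ @nhds _ (constructibleTop A) q ↔
      ∀ a : A, (a ∈ q.asIdeal ↔ {p : PrimeSpectrum A | a ∈ p.asIdeal} ∈ u) := by
  rw [constructibleTop, TopologicalSpace.nhds_generateFrom, le_iInf₂_iff]
  constructor
  · intro h a
    constructor
    · intro ha
      exact Filter.le_principal_iff.mp (h _ ⟨ha, Or.inr ⟨a, rfl⟩⟩)
    · intro hu
      by_contra ha
      have := Filter.le_principal_iff.mp (h {p | a ∉ p.asIdeal} ⟨ha, Or.inl ⟨a, rfl⟩⟩)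
      exact absurd hu (Ultrafilter.compl_mem_iff_notMem.mp this)
  · rintro h s ⟨hq, (⟨f, rfl⟩ | ⟨f, rfl⟩)⟩
    · exact Filter.le_principal_iff.mpr
        (Ultrafilter.compl_mem_iff_notMem.mpr (fun hf => hq ((h f).mpr hf)))
    · exact Filter.le_principal_iff.mpr ((h f).mp hq)

theorem closure_constructible_eq_ultrafilter_limits {A : Type*} [CommRing A]
    (Y : Set (PrimeSpectrum A)) :
    @closure _ (constructibleTop A) Y =
      {q : PrimeSpectrum A | ∃ 𝒰 : Ultrafilter Y, (q.asIdeal : Set A) = ultraLimitSet Y 𝒰} := by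
  letI := constructibleTop A
  ext q
  rw [mem_closure_iff_ultrafilter]
  simp only [Set.mem_setOf_eq]
  constructor
  · rintro ⟨u, hY, hu⟩
    have hrange : Set.range (Subtype.val : Y → PrimeSpectrum A) ∈ u := by
      rwa [Subtype.range_coe]
    refine ⟨u.comap Subtype.val_injective hrange, ?_⟩
    ext a
    have := (le_nhds_constructible_iff q u).mp hu a
    simp only [ultraLimitSet, Set.mem_setOf_eq, SetLike.mem_coe,
      Ultrafilter.mem_comap]
    rw [this]
    constructor
    · intro h
      refine u.mem_of_superset (Filter.inter_mem h hY) ?_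
      rintro p ⟨hp, hpY⟩
      exact ⟨⟨p, hpY⟩, hp, rfl⟩
    · intro h
      refine u.mem_of_superset h ?_
      rintro p ⟨⟨p', hp'⟩, hmem, rfl⟩
      exact hmem
  · rintro ⟨𝒰, h𝒰⟩
    refine ⟨𝒰.map Subtype.val, ?_, ?_⟩
    · exact Filter.mem_of_superset (Filter.image_mem_map (Filter.univ_mem))
        (by rintro p ⟨⟨p', hp'⟩, -, rfl⟩; exact hp')
    · rw [le_nhds_constructible_iff]
      intro a
      have : a ∈ q.asIdeal ↔ a ∈ ultraLimitSet Y 𝒰 := by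
        rw [← h𝒰]; rfl
      rw [this]
      simp only [ultraLimitSet, Set.mem_setOf_eq, Ultrafilter.mem_map]
      rfl
end

section
/- Let A be a commutative ring and Y ⊆ Spec(A). Then Y is closed in the constructible (patch) topology on Spec(A) if and only if Y contains all of its ultrafilter limit points, i.e., for every ultrafilter 𝒰 on Y, the prime ideal Y_𝒰 = {a ∈ A : {p ∈ Y : a ∈ p} ∈ 𝒰} belongs to Y. -/
open scoped nonZeroDivisors

open Filter TopologicalSpace in
theorem isClosed_constructible_iff_ultrafilter_limits {A : Type*} [CommRing A]
    (Y : Set (PrimeSpectrum A)) :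
    @IsClosed _ (constructibleTop A) Y ↔
      ∀ (𝒰 : Ultrafilter Y) (q : PrimeSpectrum A),
        (q.asIdeal : Set A) = ultraLimitSet Y 𝒰 → q ∈ Y := by
  letI := constructibleTop A
  set g : Set (Set (PrimeSpectrum A)) :=
    {s | (∃ f : A, s = {p : PrimeSpectrum A | f ∉ p.asIdeal}) ∨
      (∃ f : A, s = {p : PrimeSpectrum A | f ∈ p.asIdeal})} with hg
  constructor
  · intro hY 𝒰 q hq
    set F : Ultrafilter (PrimeSpectrum A) := 𝒰.map Subtype.val with hF
    have hYF : Y ∈ F := by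
      have hpre : (Subtype.val : Y → PrimeSpectrum A) ⁻¹' Y = Set.univ := by
        ext p; simp [p.2]
      show Subtype.val ⁻¹' Y ∈ 𝒰
      rw [hpre]; exact Filter.univ_mem
    have hmem : ∀ a : A, a ∈ q.asIdeal ↔ {p : PrimeSpectrum A | a ∈ p.asIdeal} ∈ F := by
      intro a
      have h1 : a ∈ q.asIdeal ↔ a ∈ ultraLimitSet Y 𝒰 := by
        constructor
        · intro h; rw [← hq]; exact h
        · intro h; rw [← hq] at h; exact h
      rw [h1]
      exact Iff.rfl
    have hle : (F : Filter (PrimeSpectrum A)) ≤ nhds q := by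
      have hn : (nhds q : Filter (PrimeSpectrum A)) = ⨅ s ∈ {s | q ∈ s ∧ s ∈ g}, 𝓟 s :=
        nhds_generateFrom
      rw [hn]
      refine le_iInf₂ fun s hs => ?_
      obtain ⟨hqs, hsg⟩ := hs
      rw [le_principal_iff]
      rcases hsg with ⟨f, rfl⟩ | ⟨f, rfl⟩
      · have hfq : f ∉ q.asIdeal := hqs
        have hnot : {p : PrimeSpectrum A | f ∈ p.asIdeal} ∉ F := fun h => hfq ((hmem f).mpr h)
        have := Ultrafilter.compl_mem_iff_notMem.mpr hnot
        have hcpl : {p : PrimeSpectrum A | f ∈ p.asIdeal}ᶜ =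
            {p : PrimeSpectrum A | f ∉ p.asIdeal} := rfl
        rwa [hcpl] at this
      · exact (hmem f).mp hqs
    have hcl : ClusterPt q (𝓟 Y) :=
      (Ultrafilter.clusterPt_iff.mpr hle).mono (le_principal_iff.mpr hYF)
    exact isClosed_iff_clusterPt.mp hY q hcl
  · intro h
    rw [isClosed_iff_clusterPt]
    intro q hq
    obtain ⟨F, hFY, hFq⟩ := clusterPt_iff_ultrafilter.mp hq
    have hYF : Y ∈ F := le_principal_iff.mp hFY
    have hrange : Set.range (Subtype.val : Y → PrimeSpectrum A) ∈ F := by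
      rwa [Subtype.range_coe]
    set 𝒰 := F.comap Subtype.val_injective hrange with h𝒰
    refine h 𝒰 q ?_
    ext a
    simp only [SetLike.mem_coe, ultraLimitSet, Set.mem_setOf_eq, h𝒰,
      Ultrafilter.mem_comap]
    have himg : Subtype.val '' {p : Y | a ∈ (p : PrimeSpectrum A).asIdeal} =
        Y ∩ {p : PrimeSpectrum A | a ∈ p.asIdeal} := by
      ext p
      constructor
      · rintro ⟨⟨p', hp'⟩, hmem, rfl⟩; exact ⟨hp', hmem⟩
      · rintro ⟨hpY, hpa⟩; exact ⟨⟨p, hpY⟩, hpa, rfl⟩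
    rw [himg]
    have hiff : Y ∩ {p : PrimeSpectrum A | a ∈ p.asIdeal} ∈ F ↔
        {p : PrimeSpectrum A | a ∈ p.asIdeal} ∈ F :=
      ⟨fun h' => Filter.mem_of_superset h' Set.inter_subset_right,
       fun h' => Filter.inter_mem hYF h'⟩
    rw [hiff]
    have hVopen : IsOpen {p : PrimeSpectrum A | a ∈ p.asIdeal} :=
      TopologicalSpace.GenerateOpen.basic _ (Or.inr ⟨a, rfl⟩)
    have hDopen : IsOpen {p : PrimeSpectrum A | a ∉ p.asIdeal} :=
      TopologicalSpace.GenerateOpen.basic _ (Or.inl ⟨a, rfl⟩)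
    constructor
    · intro ha
      exact hFq (hVopen.mem_nhds ha)
    · intro ha
      by_contra hna
      have hD : {p : PrimeSpectrum A | a ∉ p.asIdeal} ∈ F := hFq (hDopen.mem_nhds hna)
      have hcpl : {p : PrimeSpectrum A | a ∈ p.asIdeal}ᶜ =
          {p : PrimeSpectrum A | a ∉ p.asIdeal} := rfl
      rw [← hcpl] at hD
      exact (Ultrafilter.compl_mem_iff_notMem.mp hD) ha
end

section
/- Let A be a commutative ring and Y an infinite subset of Spec(A) such that every nonzero element of A belongs to only finitely many prime ideals in Y. Then A is an integral domain and the constructible-topology closure of Y is Cl^c(Y) = Y ∪ {(0)}. -/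
open scoped nonZeroDivisors

theorem closure_of_locally_finite_family {A : Type*} [CommRing A]
    (Y : Set (PrimeSpectrum A)) (hinf : Y.Infinite)
    (hfin : ∀ a : A, a ≠ 0 → {p ∈ Y | a ∈ p.asIdeal}.Finite) :
    IsDomain A ∧
      @closure _ (constructibleTop A) Y = Y ∪ {q : PrimeSpectrum A | q.asIdeal = ⊥} := by
  set gens : Set (Set (PrimeSpectrum A)) :=
    {s | (∃ f : A, s = {p : PrimeSpectrum A | f ∉ p.asIdeal}) ∨
      (∃ f : A, s = {p : PrimeSpectrum A | f ∈ p.asIdeal})} with hgens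
  obtain ⟨p0, hp0⟩ := hinf.nonempty
  haveI hnt : Nontrivial A := by
    refine ⟨0, 1, fun h => p0.isPrime.ne_top ?_⟩
    rw [Ideal.eq_top_iff_one]
    exact h ▸ p0.asIdeal.zero_mem
  haveI hnzd : NoZeroDivisors A := by
    refine ⟨fun {a b} hab => ?_⟩
    by_contra h
    push_neg at h
    obtain ⟨ha, hb⟩ := h
    refine hinf (((hfin a ha).union (hfin b hb)).subset fun p hp => ?_)
    have hab' : a * b ∈ p.asIdeal := hab ▸ p.asIdeal.zero_mem
    rcases p.isPrime.mem_or_mem hab' with h | h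
    · exact Or.inl ⟨hp, h⟩
    · exact Or.inr ⟨hp, h⟩
  haveI hdom : IsDomain A := NoZeroDivisors.to_isDomain A
  refine ⟨hdom, ?_⟩
  letI τ : TopologicalSpace (PrimeSpectrum A) := constructibleTop A
  have hopen : ∀ U : Set (PrimeSpectrum A),
      TopologicalSpace.GenerateOpen gens U → @IsOpen _ (constructibleTop A) U := fun U h => h
  apply le_antisymm
  · -- closure Y ⊆ Y ∪ {(0)}
    intro q hq
    by_contra hq'
    simp only [Set.mem_union, Set.mem_setOf_eq, not_or] at hq'
    obtain ⟨hqY, hqbot⟩ := hq'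
    obtain ⟨f, hfq, hf0⟩ : ∃ f, f ∈ q.asIdeal ∧ f ≠ 0 := by
      by_contra h
      push_neg at h
      exact hqbot (le_antisymm (fun x hx => (Ideal.mem_bot).mpr (h x hx)) bot_le)
    set S : Set (PrimeSpectrum A) := {p ∈ Y | f ∈ p.asIdeal} with hS
    have hSfin : S.Finite := hfin f hf0
    have sep : ∀ p : PrimeSpectrum A, ∃ U : Set (PrimeSpectrum A),
        TopologicalSpace.GenerateOpen gens U ∧ (p ∈ S → q ∈ U ∧ p ∉ U) := by
      intro p
      by_cases hp : p ∈ S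
      swap
      · exact ⟨Set.univ, TopologicalSpace.GenerateOpen.univ, fun h => absurd h hp⟩
      have hpq : p.asIdeal ≠ q.asIdeal := by
        intro h
        have hq' : q ∈ S := PrimeSpectrum.ext h ▸ hp
        exact hqY hq'.1
      obtain ⟨g, hg⟩ := not_forall.mp (fun h => hpq (Ideal.ext h))
      by_cases hgq : g ∈ q.asIdeal
      · exact ⟨{x | g ∈ x.asIdeal}, TopologicalSpace.GenerateOpen.basic _ (Or.inr ⟨g, rfl⟩),
          fun _ => ⟨hgq, fun hgp => hg ⟨fun _ => hgq, fun _ => hgp⟩⟩⟩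
      · have hgp : g ∈ p.asIdeal := by
          by_contra hgp
          exact hg ⟨fun h => absurd h hgp, fun h => absurd h hgq⟩
        exact ⟨{x | g ∉ x.asIdeal}, TopologicalSpace.GenerateOpen.basic _ (Or.inl ⟨g, rfl⟩),
          fun _ => ⟨hgq, fun h => h hgp⟩⟩
    choose U hUopen hU using sep
    set V : Set (PrimeSpectrum A) := {x | f ∈ x.asIdeal} ∩ ⋂ p ∈ S, U p with hV
    have hVopen : @IsOpen _ (constructibleTop A) V := by
      refine IsOpen.inter (hopen _ (TopologicalSpace.GenerateOpen.basic _ (Or.inr ⟨f, rfl⟩))) ?_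
      exact hSfin.isOpen_biInter fun p hp => hopen _ (hUopen p)
    have hqV : q ∈ V := ⟨hfq, Set.mem_biInter fun p hp => (hU p hp).1⟩
    obtain ⟨y, hyV, hyY⟩ := mem_closure_iff.mp hq V hVopen hqV
    have hyS : y ∈ S := ⟨hyY, hyV.1⟩
    exact (hU y hyS).2 (Set.mem_iInter₂.mp hyV.2 y hyS)
  · -- Y ∪ {(0)} ⊆ closure Y
    intro q hq
    rcases hq with hq | hq
    · exact subset_closure hq
    · simp only [Set.mem_setOf_eq] at hq
      rw [mem_closure_iff]
      intro o ho hqo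
      have key : ∀ U : Set (PrimeSpectrum A), TopologicalSpace.GenerateOpen gens U →
          q ∈ U → (Y \ U).Finite := by
        intro U hU
        induction hU with
        | basic s hs =>
          rcases hs with ⟨f, rfl⟩ | ⟨f, rfl⟩
          · intro hqU
            have hf0 : f ≠ 0 := fun h =>
              hqU (by rw [hq, h]; exact Ideal.zero_mem ⊥)
            refine (hfin f hf0).subset fun p hp => ?_
            exact ⟨hp.1, not_not.mp hp.2⟩
          · intro hqU
            have : f = 0 := by
              rw [Set.mem_setOf_eq, hq, Ideal.mem_bot] at hqU
              exact hqU
            subst this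
            refine Set.Finite.subset (Set.finite_empty) fun p hp => ?_
            exact absurd (p.asIdeal.zero_mem) hp.2
        | univ => intro _; simp
        | inter s t _ _ ihs iht =>
          intro hqU
          refine ((ihs hqU.1).union (iht hqU.2)).subset fun p hp => ?_
          rcases not_and_or.mp hp.2 with h | h
          · exact Or.inl ⟨hp.1, h⟩
          · exact Or.inr ⟨hp.1, h⟩
        | sUnion 𝒮 _ ih =>
          intro hqU
          obtain ⟨s, hs𝒮, hqs⟩ := hqU
          exact (ih s hs𝒮 hqs).subset fun p hp =>
            ⟨hp.1, fun h => hp.2 ⟨s, hs𝒮, h⟩⟩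
      have hfinYo : (Y \ o).Finite := key o ho hqo
      have : (Y \ (Y \ o)).Infinite := hinf.diff hfinYo
      obtain ⟨y, hy⟩ := this.nonempty
      exact ⟨y, (not_not.mp (not_and.mp hy.2 hy.1) : y ∈ o), hy.1⟩
end

section
/- Let V ⊆ W be valuation domains with the same field of fractions, and suppose the residue field of W is finite. Then V = W. -/
/-!
If `x ∈ W` is not a unit of `W`, then `x⁻¹ ∉ V`, so `x ∈ V`. If `x` is a unit of `W`, its image
in the finite residue field has finite order `n`, so `x ^ n - 1` lies in the maximal ideal and
is a nonunit of `W`, hence lies in `V`. Thus `x ^ n ∈ V`, and a valuation ring contains every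
element some positive power of which it contains.
-/

theorem Ideal.exists_pow_sub_one_mem_of_isUnit {R : Type*} [CommRing R] (M : Ideal R)
    [Finite (R ⧸ M)] {u : R} (hu : IsUnit u) : ∃ n, 0 < n ∧ u ^ n - 1 ∈ M := by
  obtain ⟨n, hn, hpow⟩ :=
    (isOfFinOrder_of_finite (hu.map (Ideal.Quotient.mk M)).unit).exists_pow_eq_one
  refine ⟨n, hn, Ideal.Quotient.eq.mp ?_⟩
  simpa [Units.ext_iff] using hpow

namespace Subring

variable {K : Type*} [Field K]

theorem isUnit_mk_of_inv_mem (W : Subring K) {x : K} (hx : x ∈ W) (hx0 : x ≠ 0)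
    (hxinv : x⁻¹ ∈ W) : IsUnit (⟨x, hx⟩ : W) :=
  IsUnit.of_mul_eq_one (⟨x⁻¹, hxinv⟩ : W) (Subtype.ext (mul_inv_cancel₀ hx0))

theorem mem_of_pow_mem {V : Subring K} (hV : ∀ x : K, x ≠ 0 → x ∈ V ∨ x⁻¹ ∈ V) {x : K} {n : ℕ}
    (hn : 0 < n) (hxn : x ^ n ∈ V) : x ∈ V := by
  by_cases hx0 : x = 0
  · exact hx0 ▸ V.zero_mem
  obtain ⟨m, rfl⟩ : ∃ m, n = m + 1 := ⟨n - 1, by omega⟩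
  have hx : x ^ (m + 1) * x⁻¹ ^ m = x := by
    rw [pow_succ', mul_assoc, ← mul_pow, mul_inv_cancel₀ hx0, one_pow, mul_one]
  refine (hV x hx0).elim id fun hxinv => ?_
  exact hx ▸ V.mul_mem hxn (V.pow_mem hxinv m)

theorem mem_of_not_isUnit {V W : Subring K} (hVW : V ≤ W)
    (hV : ∀ x : K, x ≠ 0 → x ∈ V ∨ x⁻¹ ∈ V) {x : W} (hx : ¬IsUnit x) : (x : K) ∈ V := by
  by_cases hx0 : (x : K) = 0
  · exact hx0 ▸ V.zero_mem
  exact (hV x hx0).resolve_right fun hxinv => hx (W.isUnit_mk_of_inv_mem x.2 hx0 (hVW hxinv))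

end Subring

theorem valuation_subring_eq_of_finite_residue_general {K : Type*} [Field K] (V W : Subring K)
    (hVW : V ≤ W)
    (hV : ∀ x : K, x ≠ 0 → x ∈ V ∨ x⁻¹ ∈ V)
    (hfin : ∃ M : Ideal W, M.IsMaximal ∧ Finite (W ⧸ M)) :
    V = W := by
  obtain ⟨M, hM, hfinM⟩ := hfin
  refine le_antisymm hVW fun x hxW => ?_
  let u : W := ⟨x, hxW⟩
  by_cases hu : IsUnit u
  · obtain ⟨n, hn, hmem⟩ := M.exists_pow_sub_one_mem_of_isUnit hu
    have hnonunit : ¬IsUnit (u ^ n - 1) := fun h => hM.ne_top (M.eq_top_of_isUnit_mem hmem h)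
    have hxn : x ^ n ∈ V := by
      simpa using V.add_mem (Subring.mem_of_not_isUnit hVW hV hnonunit) V.one_mem
    exact Subring.mem_of_pow_mem hV hn hxn
  · exact Subring.mem_of_not_isUnit hVW hV hu

theorem valuation_subring_eq_of_finite_residue {K : Type*} [Field K] (V W : Subring K)
    (hVW : V ≤ W)
    (hV : ∀ x : K, x ≠ 0 → x ∈ V ∨ x⁻¹ ∈ V)
    (hW : ∀ x : K, x ≠ 0 → x ∈ W ∨ x⁻¹ ∈ W)
    (hfin : ∃ M : Ideal W, M.IsMaximal ∧ Finite (W ⧸ M)) :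
    V = W :=
  valuation_subring_eq_of_finite_residue_general V W hVW hV hfin
end

section
/- Let D be an integral domain. If D is a Prüfer v-multiplication domain, then the set t-Spec(D) of t-prime ideals of D (together with the zero ideal) is closed in Spec(D) with respect to the constructible topology. -/
open scoped nonZeroDivisors

/-- The localization of `R` at the prime `p`, viewed inside a field `K` to which `R` maps. -/
def locg {R K : Type*} [CommRing R] [Field K] [Algebra R K] (p : PrimeSpectrum R) :
    Subring K where
  carrier := {x : K | ∃ a b : R, b ∉ p.asIdeal ∧ x * algebraMap R K b = algebraMap R K a}
  zero_mem' := ⟨0, 1, fun h => p.2.ne_top ((Ideal.eq_top_iff_one _).2 h), by simp⟩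
  one_mem' := ⟨1, 1, fun h => p.2.ne_top ((Ideal.eq_top_iff_one _).2 h), by simp⟩
  add_mem' := by
    rintro x y ⟨a₁, b₁, hb₁, e₁⟩ ⟨a₂, b₂, hb₂, e₂⟩
    exact ⟨a₁ * b₂ + a₂ * b₁, b₁ * b₂,
      fun h => ((p.2.mem_or_mem h).elim hb₁ hb₂), by
        rw [map_add, map_mul, map_mul, map_mul]
        linear_combination (algebraMap R K b₂) * e₁ + (algebraMap R K b₁) * e₂⟩
  mul_mem' := by
    rintro x y ⟨a₁, b₁, hb₁, e₁⟩ ⟨a₂, b₂, hb₂, e₂⟩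
    exact ⟨a₁ * a₂, b₁ * b₂,
      fun h => ((p.2.mem_or_mem h).elim hb₁ hb₂), by
        rw [map_mul, map_mul, show x * y * (algebraMap R K b₁ * algebraMap R K b₂)
          = (x * algebraMap R K b₁) * (y * algebraMap R K b₂) by ring, e₁, e₂]⟩
  neg_mem' := by
    rintro x ⟨a, b, hb, e⟩
    exact ⟨-a, b, hb, by rw [map_neg, neg_mul, e]⟩
/-- `I` is a `t`-ideal: its `t`-closure is contained in (hence equal to) `I`. -/
def IsTIdeal (R : Type*) [CommRing R] [IsDomain R] (I : Ideal R) : Prop :=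
  ∀ x : R, (∃ J : Ideal R, J.FG ∧ J ≤ I ∧
    algebraMap R (FractionRing R) x ∈
      (1 / (1 / (J : FractionalIdeal R⁰ (FractionRing R))))) → x ∈ I

/-- `M` is a `t`-maximal ideal: maximal among proper `t`-ideals. -/
def IsTMax (R : Type*) [CommRing R] [IsDomain R] (M : Ideal R) : Prop :=
  IsTIdeal R M ∧ M ≠ ⊤ ∧ ∀ I : Ideal R, IsTIdeal R I → I ≠ ⊤ → M ≤ I → I = M
/-- `R` is a Prüfer `v`-multiplication domain: the localization at every `t`-maximal
ideal is a valuation domain. -/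
def IsPvMD (R : Type*) [CommRing R] [IsDomain R] : Prop :=
  ∀ M : Ideal R, IsTMax R M → ∀ hM : M.IsPrime,
    ValuationRing (locg (K := FractionRing R) ⟨M, hM⟩)
theorem tSpec_isClosed_of_isPvMD {R : Type*} [CommRing R] [IsDomain R] (h : IsPvMD R) :
    @IsClosed _ (constructibleTop R) {p : PrimeSpectrum R | IsTIdeal R p.asIdeal} := by
  letI : TopologicalSpace (PrimeSpectrum R) := constructibleTop R
  rw [show @IsClosed _ (constructibleTop R) = IsClosed from rfl, ← isOpen_compl_iff]
  have key : {p : PrimeSpectrum R | IsTIdeal R p.asIdeal}ᶜ =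
      ⋃ (x : R) (J : Ideal R) (_ : J.FG) (_ : algebraMap R (FractionRing R) x ∈
        (1 / (1 / (J : FractionalIdeal R⁰ (FractionRing R))))),
        ({p : PrimeSpectrum R | J ≤ p.asIdeal} ∩ {p | x ∉ p.asIdeal}) := by
    ext p
    simp only [Set.mem_compl_iff, Set.mem_setOf_eq, Set.mem_iUnion, Set.mem_inter_iff, IsTIdeal]
    push_neg
    constructor
    · rintro ⟨x, ⟨J, hJ, hle, hx⟩, hxp⟩; exact ⟨x, J, hJ, hx, hle, hxp⟩
    · rintro ⟨x, J, hJ, hx, hle, hxp⟩; exact ⟨x, ⟨J, hJ, hle, hx⟩, hxp⟩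
  rw [key]
  refine isOpen_iUnion fun x => isOpen_iUnion fun J => isOpen_iUnion fun hJ =>
    isOpen_iUnion fun _ => IsOpen.inter ?_ ?_
  · obtain ⟨s, rfl⟩ := hJ
    have hrw : {p : PrimeSpectrum R | Ideal.span (s : Set R) ≤ p.asIdeal}
        = ⋂ f ∈ (s : Set R), {p : PrimeSpectrum R | f ∈ p.asIdeal} := by
      ext p
      simp [Ideal.span_le, Set.subset_def]
    rw [hrw]
    exact Set.Finite.isOpen_biInter s.finite_toSet fun f _ =>
      TopologicalSpace.GenerateOpen.basic _ (Or.inr ⟨f, rfl⟩)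
  · exact TopologicalSpace.GenerateOpen.basic _ (Or.inl ⟨x, rfl⟩)
end

section
/- Let D be an integral domain. Then D is a Prüfer v-multiplication domain if and only if D is an essential domain and there exists an essential representation {D_p : p ∈ Y} of D, for some Y ⊆ Spec(D), such that the constructible-topology closure of Y is contained in ℰ(D) = {p ∈ Spec(D) : D_p is a valuation domain}. -/
open scoped nonZeroDivisors

/-- The essential prime spectrum: the primes at which the localization is a valuation
domain. -/
def EssSpec (R : Type*) [CommRing R] [IsDomain R] : Set (PrimeSpectrum R) :=
  {p : PrimeSpectrum R | ValuationRing (locg (K := FractionRing R) p)}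

/-- `{D_p : p ∈ Y}` is an essential representation of `R`: each localization is a
valuation domain, and their intersection (inside the quotient field) is `R`. -/
def IsEssentialRep (R : Type*) [CommRing R] [IsDomain R] (Y : Set (PrimeSpectrum R)) : Prop :=
  (∀ p ∈ Y, ValuationRing (locg (K := FractionRing R) p)) ∧
    (⨅ p ∈ Y, locg (K := FractionRing R) p) = (algebraMap R (FractionRing R)).range

/-- `R` is an essential domain. -/
def IsEssential (R : Type*) [CommRing R] [IsDomain R] : Prop :=
  ∃ Y : Set (PrimeSpectrum R), IsEssentialRep R Y
/-! Write `(R :_R x)` for the ideal of denominators of `x`, so that `x ∈ R_p` iff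
`(R :_R x) ⊄ p`.

If `R` is a PvMD, the `t`-maximal ideals are prime and every proper `t`-ideal, in particular a
proper `(R :_R x)`, lies in one of them; so they form an essential representation. Moreover, since
`x` or `x⁻¹` lies in each `R_M`, the `t`-closure of `(R :_R x) + (R :_R x⁻¹)` is `R`: some finitely
generated `J` inside it has `J_v = R`. The primes containing `J` form a constructible open set
that contains no `t`-maximal ideal, so no prime in the constructible closure contains both
denominator ideals, i.e. every localization there is a valuation domain.

Conversely, let `Y` be an essential representation and `M` a `t`-maximal ideal. A finitely
generated `J ⊆ M` lies in some `q ∈ Y`, for otherwise every `z` with `zJ ⊆ R` lies in all `R_q`,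
whence `J_v = R` and `1 ∈ M_t = M`. An ultrafilter on `Y` containing all `V(J) ∩ Y` then converges
in the constructible topology to a prime `P ⊇ M` of the closure of `Y`, and `R_M` is an overring
of the valuation domain `R_P`. -/

open scoped Topology

section ValuationCriterion

variable {K : Type*} [Field K]

theorem valuationRing_of_mem_or_inv_mem (W : Subring K) (h : ∀ x : K, x ∈ W ∨ x⁻¹ ∈ W) :
    ValuationRing W :=
  inferInstanceAs (ValuationRing (ValuationSubring.ofSubring W h))

theorem mem_or_inv_mem_of_valuationRing {R : Type*} [CommRing R] [Algebra R K]
    [IsFractionRing R K] {V : Subring K} [ValuationRing V] (hRV : (algebraMap R K).range ≤ V)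
    (x : K) : x ∈ V ∨ x⁻¹ ∈ V := by
  obtain ⟨r, s, -, rfl⟩ := IsFractionRing.div_surjective R x
  rcases ValuationRing.dvd_total (⟨_, hRV ⟨r, rfl⟩⟩ : V) ⟨_, hRV ⟨s, rfl⟩⟩ with
    ⟨c, hc⟩ | ⟨c, hc⟩
  · right
    rcases eq_or_ne (algebraMap R K r) 0 with hr | hr
    · simp [hr]
    · convert c.2 using 1
      rw [inv_div, div_eq_iff hr, mul_comm]
      exact congrArg Subtype.val hc
  · left
    rcases eq_or_ne (algebraMap R K s) 0 with hs | hs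
    · simp [hs]
    · convert c.2 using 1
      rw [div_eq_iff hs, mul_comm]
      exact congrArg Subtype.val hc

theorem valuationRing_of_le {R : Type*} [CommRing R] [Algebra R K] [IsFractionRing R K]
    {V W : Subring K} [ValuationRing V] (hRV : (algebraMap R K).range ≤ V) (hVW : V ≤ W) :
    ValuationRing W :=
  valuationRing_of_mem_or_inv_mem W fun x =>
    (mem_or_inv_mem_of_valuationRing hRV x).imp (@hVW _) (@hVW _)

end ValuationCriterion

section Localization

variable {R K : Type*} [CommRing R] [Field K] [Algebra R K]

variable (R) in
/-- The ideal `(R :_R x)` of denominators of `x`. -/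
def denominatorIdeal (x : K) : Ideal R :=
  (1 : Submodule R K).colon {x}

theorem mem_denominatorIdeal {x : K} {r : R} :
    r ∈ denominatorIdeal R x ↔ x * algebraMap R K r ∈ (algebraMap R K).range := by
  rw [denominatorIdeal, Submodule.mem_colon_singleton, Submodule.mem_one, Algebra.smul_def,
    mul_comm]
  rfl

theorem denominatorIdeal_eq_top_iff {x : K} :
    denominatorIdeal R x = ⊤ ↔ x ∈ (algebraMap R K).range := by
  rw [Ideal.eq_top_iff_one, mem_denominatorIdeal, map_one, mul_one]

theorem mem_locg_iff {p : PrimeSpectrum R} {x : K} :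
    x ∈ locg p ↔ ¬denominatorIdeal R x ≤ p.asIdeal := by
  simp only [SetLike.not_le_iff_exists, mem_denominatorIdeal, RingHom.mem_range]
  constructor
  · rintro ⟨a, b, hb, e⟩
    exact ⟨b, ⟨a, e.symm⟩, hb⟩
  · rintro ⟨b, ⟨a, e⟩, hb⟩
    exact ⟨a, b, hb, e.symm⟩

theorem range_le_locg (p : PrimeSpectrum R) : (algebraMap R K).range ≤ locg p := by
  rintro x hx
  rw [mem_locg_iff, (denominatorIdeal_eq_top_iff (R := R)).2 hx, top_le_iff]
  exact p.2.ne_top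

theorem locg_antitone {p q : PrimeSpectrum R} (h : p.asIdeal ≤ q.asIdeal) :
    locg (K := K) q ≤ locg p := by
  intro x
  rw [mem_locg_iff, mem_locg_iff]
  exact mt fun hp => hp.trans h

end Localization

section VClosure

open FractionalIdeal

variable {R K : Type*} [CommRing R] [IsDomain R] [Field K] [Algebra R K] [IsFractionRing R K]

noncomputable def vClosure (J : Ideal R) : FractionalIdeal R⁰ K :=
  1 / (1 / (J : FractionalIdeal R⁰ K))

theorem vClosure_bot : vClosure (K := K) (⊥ : Ideal R) = 0 := by
  rw [vClosure, coeIdeal_bot, FractionalIdeal.div_zero, FractionalIdeal.div_zero]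

theorem mem_one_div_coeIdeal_iff {J : Ideal R} (hJ : J ≠ ⊥) {z : K} :
    z ∈ 1 / (J : FractionalIdeal R⁰ K) ↔ J ≤ denominatorIdeal R z := by
  rw [mem_div_iff_of_ne_zero (coeIdeal_ne_zero.2 hJ)]
  simp only [mem_coeIdeal, mem_one_iff, forall_exists_index, and_imp, forall_apply_eq_imp_iff₂]
  exact forall₂_congr fun j _ => mem_denominatorIdeal.symm

theorem mem_vClosure_iff {J : Ideal R} (hJ : J ≠ ⊥) {x : K} :
    x ∈ vClosure J ↔ ∀ z : K, J ≤ denominatorIdeal R z → x * z ∈ (algebraMap R K).range := by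
  have hJ' : 1 / (J : FractionalIdeal R⁰ K) ≠ 0 := by
    intro h
    have h1 : (1 : K) ∈ 1 / (J : FractionalIdeal R⁰ K) :=
      (mem_one_div_coeIdeal_iff hJ).2 fun j _ => mem_denominatorIdeal.2 ⟨j, by simp⟩
    rw [h, mem_zero_iff] at h1
    exact one_ne_zero h1
  rw [vClosure, mem_div_iff_of_ne_zero hJ']
  refine forall_congr' fun z => ?_
  rw [mem_one_div_coeIdeal_iff hJ, mem_one_iff]
  rfl

theorem algebraMap_mem_vClosure {J : Ideal R} {j : R} (hj : j ∈ J) :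
    algebraMap R K j ∈ vClosure J := by
  rcases eq_or_ne J ⊥ with rfl | hJ
  · simp [Ideal.mem_bot.1 hj, vClosure_bot, mem_zero_iff]
  · rw [mem_vClosure_iff hJ]
    intro z hz
    rw [mul_comm]
    exact mem_denominatorIdeal.1 (hz hj)

theorem vClosure_le_vClosure {J J' : Ideal R} (h : ∀ j ∈ J, algebraMap R K j ∈ vClosure J') :
    vClosure (K := K) J ≤ vClosure J' := by
  rcases eq_or_ne J ⊥ with rfl | hJ
  · simp [vClosure_bot]
  have hJ' : J' ≠ ⊥ := by
    rintro rfl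
    refine hJ (eq_bot_iff.2 fun j hj => ?_)
    simpa [vClosure_bot] using h j hj
  intro x hx
  rw [mem_vClosure_iff hJ] at hx
  rw [mem_vClosure_iff hJ']
  refine fun z hz => hx z fun j hj => mem_denominatorIdeal.2 ?_
  rw [mul_comm]
  exact (mem_vClosure_iff hJ').1 (h j hj) z hz

theorem vClosure_mono {J J' : Ideal R} (h : J ≤ J') : vClosure (K := K) J ≤ vClosure J' :=
  vClosure_le_vClosure fun _ hj => algebraMap_mem_vClosure (h hj)

theorem mul_mem_vClosure_mul {A B : Ideal R} {x y : K} (hx : x ∈ vClosure A)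
    (hy : y ∈ vClosure B) : x * y ∈ vClosure (A * B) := by
  rcases eq_or_ne A ⊥ with rfl | hA
  · simp_all [vClosure_bot]
  rcases eq_or_ne B ⊥ with rfl | hB
  · simp_all [vClosure_bot]
  rw [mem_vClosure_iff (mul_ne_zero hA hB)]
  intro z hz
  -- `AB ⊆ (R :_R z)` gives `A ⊆ (R :_R bz)` for each `b ∈ B`, so `xz` multiplies `B` into `R`.
  have hxz : B ≤ denominatorIdeal R (x * z) := fun b hb => by
    refine mem_denominatorIdeal.2 ?_
    rw [show x * z * algebraMap R K b = x * (algebraMap R K b * z) by ring]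
    refine (mem_vClosure_iff hA).1 hx _ fun a ha => mem_denominatorIdeal.2 ?_
    rw [show algebraMap R K b * z * algebraMap R K a = z * algebraMap R K (a * b) by
      rw [map_mul]; ring]
    exact mem_denominatorIdeal.1 (hz (Ideal.mul_mem_mul ha hb))
  rw [mul_right_comm, mul_comm]
  exact (mem_vClosure_iff hB).1 hy _ hxz

end VClosure

section TIdeal

variable {R : Type*} [CommRing R] [IsDomain R]

noncomputable def tClosure (I : Ideal R) : Ideal R where
  carrier := {x | ∃ J : Ideal R, J.FG ∧ J ≤ I ∧ algebraMap R (FractionRing R) x ∈ vClosure J}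
  zero_mem' := ⟨⊥, Submodule.fg_bot, bot_le, by
    simp [vClosure_bot, FractionalIdeal.mem_zero_iff]⟩
  add_mem' := by
    rintro x y ⟨J₁, hJ₁, hJ₁I, hx⟩ ⟨J₂, hJ₂, hJ₂I, hy⟩
    refine ⟨J₁ ⊔ J₂, Submodule.FG.sup hJ₁ hJ₂, sup_le hJ₁I hJ₂I, ?_⟩
    rw [map_add]
    exact (vClosure (K := FractionRing R) (J₁ ⊔ J₂) : Submodule R (FractionRing R)).add_mem
      (vClosure_mono le_sup_left hx) (vClosure_mono le_sup_right hy)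
  smul_mem' := by
    rintro c x ⟨J, hJ, hJI, hx⟩
    refine ⟨J, hJ, hJI, ?_⟩
    rw [smul_eq_mul, map_mul, ← Algebra.smul_def]
    exact (vClosure (K := FractionRing R) J : Submodule R (FractionRing R)).smul_mem c hx

theorem le_tClosure (I : Ideal R) : I ≤ tClosure I := fun x hx =>
  ⟨Ideal.span {x}, Submodule.fg_span_singleton x, (Ideal.span_singleton_le_iff_mem I).2 hx,
    algebraMap_mem_vClosure (Ideal.mem_span_singleton_self x)⟩

theorem isTIdeal_tClosure (I : Ideal R) : IsTIdeal R (tClosure I) := by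
  rintro x ⟨_, ⟨s, rfl⟩, hsI, hx⟩
  choose J hJ hJI hgJ using fun g : s => hsI (Ideal.subset_span g.2)
  refine ⟨⨆ g, J g, Submodule.fg_iSup J hJ, iSup_le hJI, vClosure_le_vClosure (fun j hj => ?_) hx⟩
  have hs : Ideal.span (s : Set R) ≤
      (vClosure (K := FractionRing R) (⨆ g, J g) : Submodule R (FractionRing R)).comap
        (Algebra.linearMap R _) :=
    Ideal.span_le.2 fun g hg => vClosure_mono (le_iSup J ⟨g, hg⟩) (hgJ ⟨g, hg⟩)
  exact hs hj

theorem exists_isTMax_le {I : Ideal R} (hI : IsTIdeal R I) (hI' : I ≠ ⊤) :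
    ∃ M, IsTMax R M ∧ I ≤ M := by
  have hchains : ∀ c ⊆ {J : Ideal R | IsTIdeal R J ∧ J ≠ ⊤}, IsChain (· ≤ ·) c → ∀ J ∈ c,
      ∃ B ∈ {J : Ideal R | IsTIdeal R J ∧ J ≠ ⊤}, ∀ J' ∈ c, J' ≤ B := by
    intro c hc hchain J hJ
    have hdir : DirectedOn (· ≤ ·) c := hchain.directedOn
    refine ⟨sSup c, ⟨?_, ?_⟩, fun _ => le_sSup⟩
    · -- a finitely generated ideal inside the union of a chain lies in one of its members
      rintro x ⟨F, hF, hFc, hx⟩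
      obtain ⟨J', hJ'c, hFJ'⟩ := (CompleteLattice.isCompactElement_iff_le_of_directed_sSup_le _ F).1
        ((Submodule.fg_iff_compact F).1 hF) c ⟨J, hJ⟩ hdir hFc
      exact le_sSup hJ'c ((hc hJ'c).1 x ⟨F, hF, hFJ', hx⟩)
    · rw [Ne, Ideal.eq_top_iff_one, Submodule.mem_sSup_of_directed ⟨J, hJ⟩ hdir]
      rintro ⟨J', hJ'c, h1⟩
      exact (hc hJ'c).2 ((Ideal.eq_top_iff_one J').2 h1)
  obtain ⟨M, hIM, hM⟩ := zorn_le_nonempty₀ _ hchains I ⟨hI, hI'⟩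
  exact ⟨M, ⟨hM.prop.1, hM.prop.2, fun J hJ hJ' hMJ => (hM.le_of_ge ⟨hJ, hJ'⟩ hMJ).antisymm hMJ⟩,
    hIM⟩

theorem IsTMax.one_mem_tClosure {M I : Ideal R} (hM : IsTMax R M) (hMI : M ≤ I)
    (hIM : ¬I ≤ M) : (1 : R) ∈ tClosure I := by
  by_contra h1
  have hI : tClosure I = M := hM.2.2 _ (isTIdeal_tClosure I)
    (fun h => h1 (h ▸ Submodule.mem_top)) (hMI.trans (le_tClosure I))
  exact hIM (hI ▸ le_tClosure I)

theorem IsTMax.isPrime {M : Ideal R} (hM : IsTMax R M) : M.IsPrime := by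
  refine Ideal.isPrime_iff.2 ⟨hM.2.1, fun {a b} hab => or_iff_not_imp_left.2 fun ha => ?_⟩
  obtain ⟨F, hF, hFM, h1⟩ := hM.one_mem_tClosure le_sup_left
    fun h => ha (h (Ideal.mem_sup_right (Ideal.mem_span_singleton_self a)))
  -- `1 ∈ F_v` with `F ⊆ M + aR`, so `b ∈ (bF)_v` with `bF ⊆ M + abR ⊆ M`.
  have hbF : Ideal.span {b} * F ≤ M := calc
    Ideal.span {b} * F ≤ Ideal.span {b} * (M ⊔ Ideal.span {a}) := Ideal.mul_mono_right hFM
    _ = Ideal.span {b} * M ⊔ Ideal.span {b * a} := by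
      rw [Ideal.mul_sup, Ideal.span_singleton_mul_span_singleton]
    _ ≤ M := sup_le Ideal.mul_le_right ((Ideal.span_singleton_le_iff_mem M).2 (mul_comm a b ▸ hab))
  refine hM.1 b ⟨_, (Submodule.fg_span_singleton b).mul hF, hbF, ?_⟩
  change _ ∈ vClosure _
  simpa only [map_one, mul_one] using
    mul_mem_vClosure_mul (algebraMap_mem_vClosure (Ideal.mem_span_singleton_self b)) h1

theorem isTIdeal_denominatorIdeal (x : FractionRing R) : IsTIdeal R (denominatorIdeal R x) := by
  rintro w ⟨J, -, hJx, hw⟩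
  rcases eq_or_ne J ⊥ with rfl | hJ
  · change _ ∈ vClosure ⊥ at hw
    rw [vClosure_bot, FractionalIdeal.mem_zero_iff,
      IsFractionRing.to_map_eq_zero_iff] at hw
    exact hw ▸ zero_mem _
  · rw [mem_denominatorIdeal, mul_comm]
    exact (mem_vClosure_iff hJ).1 hw x hJx

variable (R) in
def tMaxSpectrum : Set (PrimeSpectrum R) :=
  {p | IsTMax R p.asIdeal}

theorem iInf_locg_tMaxSpectrum :
    ⨅ p ∈ tMaxSpectrum R, locg (K := FractionRing R) p = (algebraMap R (FractionRing R)).range := by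
  refine le_antisymm (fun x hx => ?_) (le_iInf₂ fun p _ => range_le_locg p)
  rw [← denominatorIdeal_eq_top_iff (R := R)]
  by_contra hne
  obtain ⟨M, hM, hxM⟩ := exists_isTMax_le (isTIdeal_denominatorIdeal x) hne
  simp only [Subring.mem_iInf] at hx
  exact mem_locg_iff.1 (hx ⟨M, hM.isPrime⟩ hM) hxM

theorem IsPvMD.one_mem_tClosure_sup (hR : IsPvMD R) (x : FractionRing R) :
    (1 : R) ∈ tClosure (denominatorIdeal R x ⊔ denominatorIdeal R x⁻¹) := by
  by_contra h1
  obtain ⟨M, hM, hle⟩ := exists_isTMax_le (isTIdeal_tClosure _)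
    fun h => h1 (h ▸ Submodule.mem_top)
  have := hR M hM hM.isPrime
  have hxM := (le_tClosure _).trans hle
  rcases mem_or_inv_mem_of_valuationRing (range_le_locg ⟨M, hM.isPrime⟩) x with hx | hx
  · exact mem_locg_iff.1 hx (le_sup_left.trans hxM)
  · exact mem_locg_iff.1 hx (le_sup_right.trans hxM)

end TIdeal

section ConstructibleTopology

open Filter

variable {R : Type*} [CommRing R]

theorem isOpen_setOf_le_asIdeal {J : Ideal R} (hJ : J.FG) :
    IsOpen[constructibleTop R] {q : PrimeSpectrum R | J ≤ q.asIdeal} := by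
  let := constructibleTop R
  obtain ⟨s, rfl⟩ := hJ
  have hV : {q : PrimeSpectrum R | Ideal.span (s : Set R) ≤ q.asIdeal} =
      ⋂ g ∈ s, {q | g ∈ q.asIdeal} := by
    ext q
    simp [Ideal.span_le, Set.subset_def]
  rw [hV]
  exact isOpen_biInter_finset fun g _ =>
    TopologicalSpace.isOpen_generateFrom_of_mem (Or.inr ⟨g, rfl⟩)

theorem exists_mem_le_of_mem_closure {Y : Set (PrimeSpectrum R)} {p : PrimeSpectrum R}
    (hp : p ∈ closure[constructibleTop R] Y) {J : Ideal R} (hJ : J.FG) (hJp : J ≤ p.asIdeal) :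
    ∃ q ∈ Y, J ≤ q.asIdeal := by
  let := constructibleTop R
  obtain ⟨q, hqJ, hqY⟩ := mem_closure_iff.1 hp _ (isOpen_setOf_le_asIdeal hJ) hJp
  exact ⟨q, hqY, hqJ⟩

def ultrafilterLimit (U : Ultrafilter (PrimeSpectrum R)) : PrimeSpectrum R where
  asIdeal :=
    { carrier := {r | {q : PrimeSpectrum R | r ∈ q.asIdeal} ∈ U}
      zero_mem' := mem_of_superset univ_mem fun q _ => q.asIdeal.zero_mem
      add_mem' := fun ha hb =>
        mem_of_superset (inter_mem ha hb) fun q hq => q.asIdeal.add_mem hq.1 hq.2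
      smul_mem' := fun r _ ha => mem_of_superset ha fun q hq => q.asIdeal.mul_mem_left r hq }
  isPrime := by
    refine Ideal.isPrime_iff.2 ⟨fun h => ?_, fun {a b} hab => ?_⟩
    · obtain ⟨q, hq⟩ := U.nonempty_of_mem ((Ideal.eq_top_iff_one _).1 h)
      exact q.2.ne_top ((Ideal.eq_top_iff_one _).2 hq)
    · exact Ultrafilter.union_mem_iff.1 (mem_of_superset hab fun q hq => q.2.mem_or_mem hq)

theorem mem_ultrafilterLimit {U : Ultrafilter (PrimeSpectrum R)} {r : R} :
    r ∈ (ultrafilterLimit U).asIdeal ↔ {q : PrimeSpectrum R | r ∈ q.asIdeal} ∈ U :=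
  Iff.rfl

theorem le_nhds_ultrafilterLimit (U : Ultrafilter (PrimeSpectrum R)) :
    (U : Filter (PrimeSpectrum R)) ≤ @nhds _ (constructibleTop R) (ultrafilterLimit U) := by
  refine tendsto_id'.1 (TopologicalSpace.tendsto_nhds_generateFrom_iff.2 ?_)
  rintro s (⟨f, rfl⟩ | ⟨f, rfl⟩) hs <;> simp only [Set.mem_ofPred_eq, mem_ultrafilterLimit] at hs
  · exact Ultrafilter.compl_mem_iff_notMem.2 hs
  · exact hs

theorem exists_mem_closure_le {Y : Set (PrimeSpectrum R)} {I : Ideal R}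
    (h : ∀ J : Ideal R, J.FG → J ≤ I → ∃ q ∈ Y, J ≤ q.asIdeal) :
    ∃ p ∈ closure[constructibleTop R] Y, I ≤ p.asIdeal := by
  let := constructibleTop R
  let V : {J : Ideal R // J.FG ∧ J ≤ I} → Set (PrimeSpectrum R) := fun J =>
    Y ∩ {q | J.1 ≤ q.asIdeal}
  have : (⨅ J, 𝓟 (V J)).NeBot := by
    have : Nonempty {J : Ideal R // J.FG ∧ J ≤ I} := ⟨⟨⊥, Submodule.fg_bot, bot_le⟩⟩
    refine iInf_neBot_of_directed' (fun J₁ J₂ => ?_) fun J => principal_neBot_iff.2 ?_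
    · refine ⟨⟨J₁.1 ⊔ J₂.1, Submodule.FG.sup J₁.2.1 J₂.2.1, sup_le J₁.2.2 J₂.2.2⟩,
        principal_mono.2 fun q hq => ⟨hq.1, (le_sup_left.trans hq.2 : J₁.1 ≤ _)⟩,
        principal_mono.2 fun q hq => ⟨hq.1, (le_sup_right.trans hq.2 : J₂.1 ≤ _)⟩⟩
    · obtain ⟨q, hqY, hq⟩ := h J.1 J.2.1 J.2.2
      exact ⟨q, hqY, hq⟩
  let U := Ultrafilter.of (⨅ J, 𝓟 (V J))
  have hU : ∀ J, V J ∈ U := fun J => Ultrafilter.of_le _ (mem_iInf_of_mem J (mem_principal_self _))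
  refine ⟨ultrafilterLimit U, mem_closure_iff_ultrafilter.2 ⟨U, ?_, le_nhds_ultrafilterLimit U⟩,
    fun r hr => ?_⟩
  · exact mem_of_superset (hU ⟨⊥, Submodule.fg_bot, bot_le⟩) Set.inter_subset_left
  · rw [mem_ultrafilterLimit]
    refine mem_of_superset
      (hU ⟨Ideal.span {r}, Submodule.fg_span_singleton r, (Ideal.span_singleton_le_iff_mem I).2 hr⟩)
      fun q hq => (Ideal.span_singleton_le_iff_mem _).1 hq.2

end ConstructibleTopology

section EssentialRepresentation

variable {R : Type*} [CommRing R] [IsDomain R]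

theorem IsEssentialRep.mono {Y Y' : Set (PrimeSpectrum R)} (hY : IsEssentialRep R Y)
    (hYY' : Y ⊆ Y') (hY' : Y' ⊆ EssSpec R) : IsEssentialRep R Y' :=
  ⟨hY', le_antisymm ((biInf_mono hYY').trans hY.2.le) (le_iInf₂ fun p _ => range_le_locg p)⟩

theorem IsPvMD.closure_tMaxSpectrum_subset_essSpec (hR : IsPvMD R) :
    closure[constructibleTop R] (tMaxSpectrum R) ⊆ EssSpec R := by
  intro p hp
  refine valuationRing_of_mem_or_inv_mem _ fun x => ?_
  simp only [mem_locg_iff, ← not_and_or, ← sup_le_iff]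
  intro hxp
  obtain ⟨J, hJ, hJx, h1⟩ := hR.one_mem_tClosure_sup x
  obtain ⟨M, hM, hJM⟩ := exists_mem_le_of_mem_closure hp hJ (hJx.trans hxp)
  exact hM.2.1 ((Ideal.eq_top_iff_one _).2 (hM.1 1 ⟨J, hJ, hJM, h1⟩))

theorem exists_mem_le_of_iInf_locg_eq {Y : Set (PrimeSpectrum R)}
    (hY : ⨅ q ∈ Y, locg (K := FractionRing R) q = (algebraMap R (FractionRing R)).range)
    (hYne : Y.Nonempty) {I : Ideal R} (hI : IsTIdeal R I) (hI' : I ≠ ⊤) {J : Ideal R}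
    (hJ : J.FG) (hJI : J ≤ I) : ∃ q ∈ Y, J ≤ q.asIdeal := by
  by_contra! hJY
  obtain ⟨q₀, hq₀⟩ := hYne
  have hJ0 : J ≠ ⊥ := fun h => hJY q₀ hq₀ (h ▸ bot_le)
  refine hI' ((Ideal.eq_top_iff_one I).2 (hI 1 ⟨J, hJ, hJI, ?_⟩))
  change _ ∈ vClosure J
  -- `zJ ⊆ R` puts `z` in every `R_q` with `q ∈ Y`, hence in `R`.
  refine (mem_vClosure_iff hJ0).2 fun z hz => ?_
  rw [map_one, one_mul, ← hY]
  simp only [Subring.mem_iInf]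
  exact fun q hq => mem_locg_iff.2 fun h => hJY q hq (hz.trans h)

end EssentialRepresentation

theorem isPvMD_iff_essentialRep_closure_subset {R : Type*} [CommRing R] [IsDomain R] :
    IsPvMD R ↔
      IsEssential R ∧ ∃ Y : Set (PrimeSpectrum R), IsEssentialRep R Y ∧
        @closure _ (constructibleTop R) Y ⊆ EssSpec R := by
  constructor
  · intro hR
    have hT : IsEssentialRep R (tMaxSpectrum R) :=
      ⟨fun p hp => hR _ hp p.2, iInf_locg_tMaxSpectrum⟩
    have hcl := hR.closure_tMaxSpectrum_subset_essSpec
    refine ⟨⟨_, hT⟩, _, hT.mono (@subset_closure _ (constructibleTop R) _) hcl, ?_⟩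
    rwa [@closure_closure _ (constructibleTop R)]
  · rintro ⟨-, Y, hY, hYcl⟩ M hM hMp
    rcases Y.eq_empty_or_nonempty with rfl | hYne
    · have hK := hY.2
      rw [iInf_emptyset] at hK
      exact valuationRing_of_mem_or_inv_mem _ fun x =>
        Or.inl (range_le_locg _ (hK ▸ Subring.mem_top x))
    · obtain ⟨P, hPY, hMP⟩ := exists_mem_closure_le fun J hJ hJM =>
        exists_mem_le_of_iInf_locg_eq hY.2 hYne hM.1 hM.2.1 hJ hJM
      have : ValuationRing (locg (K := FractionRing R) P) := hYcl hPY
      exact valuationRing_of_le (range_le_locg P) (locg_antitone (p := ⟨M, hMp⟩) hMP)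
end

section
/- Let D be an essential domain admitting an essential representation {D_p : p ∈ Y} such that the set Y of centers is closed in Spec(D) with respect to the constructible topology. Then D is a Prüfer v-multiplication domain. -/
open scoped nonZeroDivisors

/-! Let `M` be a nonzero `t`-maximal ideal. Every nonzero finitely generated `J ≤ M` lies in
some center `p ∈ Y`: otherwise each `x` with `xJ ⊆ R` lies in every `R_p` (pick `g ∈ J \ p`),
hence in `R`, so `J⁻¹ = R`, `J_v = R` and `1 ∈ M`. The sets `Y ∩ V(f)`, `f ∈ M`, are thus
closed with the finite intersection property in the compact patch topology, so some `p ∈ Y`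
contains `M`, and `R_M ⊇ R_p` is an overring of a valuation domain. -/

namespace Subring

variable {K : Type*} [Field K]

theorem valuationRing_of_forall_mem_or_inv_mem (S : Subring K) (h : ∀ x : K, x ∈ S ∨ x⁻¹ ∈ S) :
    ValuationRing S :=
  inferInstanceAs (ValuationRing ({ S with mem_or_inv_mem' := h } : ValuationSubring K))

theorem div_mem_or_div_mem (S : Subring K) [ValuationRing S] {a b : K} (ha : a ∈ S)
    (hb : b ∈ S) : a / b ∈ S ∨ b / a ∈ S := by
  have key : ∀ x y : S, x ∣ y → (y : K) / x ∈ S := by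
    rintro x _ ⟨c, rfl⟩
    by_cases hx : (x : K) = 0 <;> simp [hx]
  rcases ValuationRing.dvd_total (⟨a, ha⟩ : S) ⟨b, hb⟩ with h | h
  · exact .inr (key _ _ h)
  · exact .inl (key _ _ h)

end Subring

section locg

variable {R K : Type*} [CommRing R] [Field K] [Algebra R K]

theorem algebraMap_mem_locg (p : PrimeSpectrum R) (a : R) : algebraMap R K a ∈ locg (K := K) p :=
  ⟨a, 1, fun h => p.2.ne_top ((Ideal.eq_top_iff_one _).2 h), by simp⟩

theorem locg_anti {p q : PrimeSpectrum R} (h : p ≤ q) : locg (K := K) q ≤ locg p :=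
  fun _ ⟨a, b, hb, e⟩ => ⟨a, b, fun hbp => hb (h hbp), e⟩

variable [IsFractionRing R K]

theorem mem_locg_of_asIdeal_eq_bot [IsDomain R] {p : PrimeSpectrum R} (hp : p.asIdeal = ⊥)
    (x : K) : x ∈ locg (K := K) p := by
  obtain ⟨⟨a, b⟩, hx⟩ := IsLocalization.surj R⁰ x
  refine ⟨a, b, ?_, hx⟩
  rw [hp, Ideal.mem_bot]
  exact nonZeroDivisors.ne_zero b.2

theorem valuationRing_locg_of_le {p q : PrimeSpectrum R} (h : p ≤ q)
    [ValuationRing (locg (K := K) q)] : ValuationRing (locg (K := K) p) := by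
  refine Subring.valuationRing_of_forall_mem_or_inv_mem _ fun x => ?_
  obtain ⟨a, b, -, rfl⟩ := IsFractionRing.div_surjective (K := K) R x
  rw [inv_div]
  exact ((locg q).div_mem_or_div_mem (algebraMap_mem_locg q a) (algebraMap_mem_locg q b)).imp
    (locg_anti h ·) (locg_anti h ·)

end locg

section constructible

variable {R : Type*} [CommRing R]

theorem constructibleTopology_le_constructibleTop :
    constructibleTopology (PrimeSpectrum R) ≤ constructibleTop R := by
  refine le_generateFrom ?_
  rintro _ (⟨f, rfl⟩ | ⟨f, rfl⟩)
  · exact (PrimeSpectrum.isCompact_basicOpen f).isOpen_constructibleTopology_of_isOpen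
      PrimeSpectrum.isOpen_basicOpen
  · refine IsCompact.isOpen_constructibleTopology_of_isClosed ?_ ?_
    · exact PrimeSpectrum.isCompact_basicOpen f
    · simpa [PrimeSpectrum.zeroLocus] using PrimeSpectrum.isClosed_zeroLocus {f}

theorem compactSpace_constructibleTop : @CompactSpace (PrimeSpectrum R) (constructibleTop R) :=
  @Function.Surjective.compactSpace (WithConstructibleTopology (PrimeSpectrum R)) _ _
    (constructibleTop R) _
    (continuous_le_rng constructibleTopology_le_constructibleTop
      (WithTopology.continuous_ofTopology _)) _ (WithTopology.ofTopology_surjective _)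

theorem exists_le_of_forall_fg_le {Y : Set (PrimeSpectrum R)}
    (hY : @IsClosed _ (constructibleTop R) Y) (I : Ideal R)
    (h : ∀ J ≤ I, J.FG → ∃ p ∈ Y, J ≤ p.asIdeal) : ∃ p ∈ Y, I ≤ p.asIdeal := by
  let _ := constructibleTop R
  have := compactSpace_constructibleTop (R := R)
  have hfin : ∀ u : Finset I,
      (Y ∩ ⋂ f ∈ u, {p : PrimeSpectrum R | (f : R) ∈ p.asIdeal}).Nonempty := by
    intro u
    obtain ⟨p, hpY, hp⟩ := h (Ideal.span (Subtype.val '' (u : Set I)))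
      (Ideal.span_le.2 (Set.image_subset_iff.2 fun f _ => f.2))
      (Submodule.fg_span (u.finite_toSet.image _))
    exact ⟨p, hpY, Set.mem_iInter₂.2 fun f hf => hp (Ideal.subset_span ⟨f, hf, rfl⟩)⟩
  obtain ⟨p, hpY, hp⟩ := hY.isCompact.inter_iInter_nonempty
    (fun f : I => {p : PrimeSpectrum R | (f : R) ∈ p.asIdeal})
    (fun f => ⟨TopologicalSpace.isOpen_generateFrom_of_mem (.inl ⟨f, rfl⟩)⟩) hfin
  exact ⟨p, hpY, fun f hf => Set.mem_iInter.1 hp ⟨f, hf⟩⟩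

end constructible

section tIdeal

variable {R K : Type*} [CommRing R] [IsDomain R] [Field K] [Algebra R K] [IsFractionRing R K]
  {Y : Set (PrimeSpectrum R)}

theorem one_div_coeIdeal_eq_one_of_forall_not_le
    (hY : ⨅ p ∈ Y, locg (K := K) p = (algebraMap R K).range) {J : Ideal R} (hJ : J ≠ ⊥)
    (hJY : ∀ p ∈ Y, ¬ J ≤ p.asIdeal) : 1 / (J : FractionalIdeal R⁰ K) = 1 := by
  have hJ' : (J : FractionalIdeal R⁰ K) ≠ 0 := FractionalIdeal.coeIdeal_ne_zero.2 hJ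
  refine le_antisymm (fun x hx => ?_) ((FractionalIdeal.le_div_iff_mul_le hJ').2 ?_)
  · rw [FractionalIdeal.mem_div_iff_of_ne_zero hJ'] at hx
    have hxR : x ∈ (algebraMap R K).range := by
      rw [← hY]
      simp only [Subring.mem_iInf]
      intro p hp
      obtain ⟨g, hgJ, hgp⟩ := SetLike.not_le_iff_exists.1 (hJY p hp)
      obtain ⟨a, ha⟩ := (FractionalIdeal.mem_one_iff R⁰).1
        (hx _ (FractionalIdeal.mem_coeIdeal_of_mem _ hgJ))
      exact ⟨a, g, hgp, ha.symm⟩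
    obtain ⟨a, rfl⟩ := hxR
    exact FractionalIdeal.coe_mem_one R⁰ a
  · rw [one_mul]
    exact FractionalIdeal.coeIdeal_le_one

end tIdeal

theorem IsTIdeal.exists_le_of_fg {R : Type*} [CommRing R] [IsDomain R]
    {Y : Set (PrimeSpectrum R)}
    (hY : ⨅ p ∈ Y, locg (K := FractionRing R) p = (algebraMap R (FractionRing R)).range)
    {I : Ideal R} (hI : IsTIdeal R I) (hI_ne_top : I ≠ ⊤) {J : Ideal R} (hJ : J.FG)
    (hJ_ne_bot : J ≠ ⊥) (hJI : J ≤ I) : ∃ p ∈ Y, J ≤ p.asIdeal := by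
  by_contra! hJY
  refine hI_ne_top ((Ideal.eq_top_iff_one I).2 (hI 1 ⟨J, hJ, hJI, ?_⟩))
  rw [one_div_coeIdeal_eq_one_of_forall_not_le hY hJ_ne_bot hJY, FractionalIdeal.div_one, map_one]
  exact FractionalIdeal.one_mem_one R⁰

theorem isPvMD_of_essentialRep_isClosed {R : Type*} [CommRing R] [IsDomain R]
    (Y : Set (PrimeSpectrum R)) (hrep : IsEssentialRep R Y)
    (hcl : @IsClosed _ (constructibleTop R) Y) :
    IsPvMD R := by
  intro M hM hM_prime
  rcases eq_or_ne M ⊥ with rfl | hM_ne_bot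
  · exact Subring.valuationRing_of_forall_mem_or_inv_mem _
      fun x => .inl (mem_locg_of_asIdeal_eq_bot rfl x)
  obtain ⟨f, hfM, hf⟩ := Submodule.exists_mem_ne_zero_of_ne_bot hM_ne_bot
  -- Adjoining `f` keeps `J` away from `⊥`, whose `v`-closure is `0` and says nothing.
  obtain ⟨p, hpY, hMp⟩ := exists_le_of_forall_fg_le hcl M fun J hJM hJ => by
    obtain ⟨p, hpY, hp⟩ := hM.1.exists_le_of_fg hrep.2 hM.2.1
      (Submodule.FG.sup hJ (Submodule.fg_span_singleton f))
      (fun h => hf (Ideal.span_singleton_eq_bot.1 (sup_eq_bot_iff.1 h).2))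
      (sup_le hJM ((Ideal.span_singleton_le_iff_mem _).2 hfM))
    exact ⟨p, hpY, le_sup_left.trans hp⟩
  have := hrep.1 p hpY
  exact valuationRing_locg_of_le (p := ⟨M, hM_prime⟩) hMp
end
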